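/- arXiv:2502.11107 — 3 statements merged into one kernel-verified Lean document; each statement's English description precedes it below -/
import Mathlib

section
/- Let p, q, r be probability vectors in ℝ^k with entries in [γ, 1] for some γ > 0. Then |KL(p‖q) − KL(p‖r)| ≤ (√2/γ)·√(KL(q‖r)), and likewise |KL(p‖q) − KL(p‖r)| ≤ (√2/γ)·√(KL(r‖q)). -/
open Real Finset

noncomputable def klF (t : ℝ) : ℝ := t * Real.log t - t + 1 - 3*(t-1)^2/(2*(t+2))
noncomputable def klG (t : ℝ) : ℝ := Real.log t - 3*((t-1)*(t+5))/(2*(t+2)^2)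

lemma hasDerivAt_klF {t : ℝ} (ht : 0 < t) : HasDerivAt klF (klG t) t := by
  have h2 : (2:ℝ)*(t+2) ≠ 0 := by positivity
  have h1 : HasDerivAt (fun t : ℝ => t * Real.log t - t + 1) (Real.log t + 1 - 1) t :=
    ((Real.hasDerivAt_mul_log ht.ne').sub (hasDerivAt_id t)).add_const 1
  have hnum : HasDerivAt (fun t : ℝ => 3*(t-1)^2) (3*(2*(t-1)^1*1)) t :=
    ((((hasDerivAt_id t).sub_const 1)).pow 2).const_mul 3
  have hden : HasDerivAt (fun t : ℝ => 2*(t+2)) (2*1) t :=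
    ((hasDerivAt_id t).add_const 2).const_mul 2
  have h3 := hnum.div hden h2
  have := h1.sub h3
  refine this.congr_deriv ?_
  unfold klG
  field_simp
  ring

lemma hasDerivAt_klG {t : ℝ} (ht : 0 < t) :
    HasDerivAt klG ((t-1)^2*(t+8)/(t*(t+2)^3)) t := by
  have h2 : (2:ℝ)*(t+2)^2 ≠ 0 := by positivity
  have h1 : HasDerivAt Real.log t⁻¹ t := Real.hasDerivAt_log ht.ne'
  have hnum : HasDerivAt (fun t : ℝ => 3*((t-1)*(t+5))) (3*(1*(t+5)+(t-1)*1)) t :=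
    ((((hasDerivAt_id t).sub_const 1)).mul ((hasDerivAt_id t).add_const 5)).const_mul 3
  have hden : HasDerivAt (fun t : ℝ => 2*(t+2)^2) (2*(2*(t+2)^1*1)) t :=
    (((hasDerivAt_id t).add_const 2).pow 2).const_mul 2
  have h3 := hnum.div hden h2
  have := h1.sub h3
  refine this.congr_deriv ?_
  have ht2 : t + 2 ≠ 0 := by positivity
  field_simp
  ring

lemma klG_mono : MonotoneOn klG (Set.Ioi 0) := by
  apply monotoneOn_of_deriv_nonneg (convex_Ioi 0)
  · exact fun x hx => (hasDerivAt_klG hx).continuousAt.continuousWithinAt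
  · intro x hx
    rw [interior_Ioi] at hx
    exact (hasDerivAt_klG hx).differentiableAt.differentiableWithinAt
  · intro x hx
    rw [interior_Ioi] at hx
    rw [(hasDerivAt_klG hx).deriv]
    have hx0 : (0:ℝ) < x := hx
    positivity

lemma klG_one : klG 1 = 0 := by simp [klG]

lemma klF_one : klF 1 = 0 := by norm_num [klF]

lemma klF_nonneg {t : ℝ} (ht : 0 < t) : 0 ≤ klF t := by
  rcases le_total t 1 with h | h
  · have anti : AntitoneOn klF (Set.Ioc 0 1) := by
      apply antitoneOn_of_deriv_nonpos (convex_Ioc 0 1)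
      · exact fun x hx => (hasDerivAt_klF hx.1).continuousAt.continuousWithinAt
      · intro x hx
        rw [interior_Ioc] at hx
        exact (hasDerivAt_klF hx.1).differentiableAt.differentiableWithinAt
      · intro x hx
        rw [interior_Ioc] at hx
        rw [(hasDerivAt_klF hx.1).deriv]
        have := klG_mono (Set.mem_Ioi.2 hx.1) (Set.mem_Ioi.2 one_pos) hx.2.le
        rwa [klG_one] at this
    have := anti ⟨ht, h⟩ ⟨one_pos, le_refl 1⟩ h
    rwa [klF_one] at this
  · have mono : MonotoneOn klF (Set.Ici 1) := by
      apply monotoneOn_of_deriv_nonneg (convex_Ici 1)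
      · exact fun x hx => (hasDerivAt_klF (lt_of_lt_of_le one_pos hx)).continuousAt.continuousWithinAt
      · intro x hx
        rw [interior_Ici] at hx
        exact (hasDerivAt_klF (lt_trans one_pos hx)).differentiableAt.differentiableWithinAt
      · intro x hx
        rw [interior_Ici] at hx
        rw [(hasDerivAt_klF (lt_trans one_pos hx)).deriv]
        have := klG_mono (Set.mem_Ioi.2 one_pos) (Set.mem_Ioi.2 (lt_trans one_pos hx)) hx.le
        rwa [klG_one] at this
    have := mono (Set.mem_Ici.2 (le_refl 1)) (Set.mem_Ici.2 h) h
    rwa [klF_one] at this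

/-- pointwise key inequality -/
lemma kl_pointwise {x y : ℝ} (hx : 0 < x) (hy : 0 < y) :
    3*(x-y)^2/(2*(x+2*y)) ≤ x * Real.log (x/y) - x + y := by
  obtain ⟨t, ht0, rfl⟩ : ∃ t, 0 < t ∧ x = t*y :=
    ⟨x/y, div_pos hx hy, (div_mul_cancel₀ x hy.ne').symm⟩
  have hlog : Real.log (t*y/y) = Real.log t := by
    rw [mul_div_assoc, div_self hy.ne', mul_one]
  rw [hlog]
  have h := klF_nonneg ht0
  unfold klF at h
  rw [sub_nonneg, div_le_iff₀ (by positivity : (0:ℝ) < 2*(t+2))] at h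
  rw [div_le_iff₀ (by positivity : (0:ℝ) < 2*(t*y+2*y))]
  nlinarith [mul_le_mul_of_nonneg_left h (sq_nonneg y)]

/-- Pinsker's inequality for finite probability vectors. -/
lemma pinsker_sum {k : ℕ} {q r : Fin k → ℝ} (hq : ∀ i, 0 < q i) (hr : ∀ i, 0 < r i)
    (hqs : ∑ i, q i = 1) (hrs : ∑ i, r i = 1) :
    ∑ i, |q i - r i| ≤ Real.sqrt 2 * Real.sqrt (∑ i, q i * Real.log (q i / r i)) := by
  set A : Fin k → ℝ := fun i => 3*(q i - r i)^2/(2*(q i + 2*r i)) with hA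
  have hApos : ∀ i, 0 ≤ A i := fun i => by
    have := hq i; have := hr i; positivity
  have hAle : ∑ i, A i ≤ ∑ i, q i * Real.log (q i / r i) := by
    have h1 : ∑ i, A i ≤ ∑ i, (q i * Real.log (q i / r i) - q i + r i) :=
      Finset.sum_le_sum fun i _ => kl_pointwise (hq i) (hr i)
    have h2 : ∑ i, (q i * Real.log (q i / r i) - q i + r i)
        = ∑ i, q i * Real.log (q i / r i) := by
      rw [Finset.sum_add_distrib, Finset.sum_sub_distrib, hqs, hrs]; ring
    linarith
  have hCS : (∑ i, |q i - r i|)^2 ≤ (∑ i, 2*(q i + 2*r i)/3) * ∑ i, A i := by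
    apply Finset.sum_sq_le_sum_mul_sum_of_sq_eq_mul
    · intro i _; have := hq i; have := hr i; positivity
    · intro i _; exact hApos i
    · intro i _
      rw [sq_abs, hA]
      have h0 : q i + 2*r i ≠ 0 := by have := hq i; have := hr i; positivity
      field_simp
      exact (mul_div_cancel_right₀ _ (by have := hq i; have := hr i; positivity)).symm
  have hsum : (∑ i, 2*(q i + 2*r i)/3) = 2 := by
    simp only [mul_add, add_div, Finset.sum_add_distrib, ← Finset.sum_div,
      ← Finset.mul_sum, hqs, hrs]
    norm_num
  rw [hsum] at hCS
  have hS0 : 0 ≤ ∑ i, |q i - r i| := Finset.sum_nonneg fun i _ => abs_nonneg _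
  have hKL0 : 0 ≤ ∑ i, q i * Real.log (q i / r i) :=
    le_trans (Finset.sum_nonneg fun i _ => hApos i) hAle
  rw [← Real.sqrt_mul (by norm_num : (0:ℝ) ≤ 2)]
  rw [Real.le_sqrt hS0 (by positivity)]
  calc (∑ i, |q i - r i|)^2 ≤ 2 * ∑ i, A i := hCS
    _ ≤ 2 * ∑ i, q i * Real.log (q i / r i) := by linarith

lemma log_sub_log_le {γ a b : ℝ} (hγ : 0 < γ) (ha : γ ≤ a) (hb : γ ≤ b) (hba : b ≤ a) :
    Real.log a - Real.log b ≤ (a - b) / γ := by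
  have ha0 : 0 < a := lt_of_lt_of_le hγ ha
  have hb0 : 0 < b := lt_of_lt_of_le hγ hb
  rw [← Real.log_div ha0.ne' hb0.ne']
  calc Real.log (a/b) ≤ a/b - 1 := Real.log_le_sub_one_of_pos (div_pos ha0 hb0)
    _ = (a - b)/b := by field_simp
    _ ≤ (a - b)/γ := by gcongr

lemma abs_log_sub_log_le {γ a b : ℝ} (hγ : 0 < γ) (ha : γ ≤ a) (hb : γ ≤ b) :
    |Real.log a - Real.log b| ≤ |a - b| / γ := by
  rcases le_total b a with h | h
  · rw [abs_of_nonneg (by linarith : (0:ℝ) ≤ a - b),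
      abs_of_nonneg (sub_nonneg.2 (Real.log_le_log (lt_of_lt_of_le hγ hb) h))]
    exact log_sub_log_le hγ ha hb h
  · rw [abs_sub_comm, abs_sub_comm a b,
      abs_of_nonneg (by linarith : (0:ℝ) ≤ b - a),
      abs_of_nonneg (sub_nonneg.2 (Real.log_le_log (lt_of_lt_of_le hγ ha) h))]
    exact log_sub_log_le hγ hb ha h

/-- The difference of forward KL divergences against a common first argument is
bounded by (√2/γ)·√KL of the second arguments, in either order. -/
theorem abs_kl_diff_le (k : ℕ) (γ : ℝ) (hγ : 0 < γ) (hγ1 : γ ≤ 1)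
    (p q r : Fin k → ℝ)
    (hp : ∀ i, γ ≤ p i ∧ p i ≤ 1)
    (hq : ∀ i, γ ≤ q i ∧ q i ≤ 1) (hr : ∀ i, γ ≤ r i ∧ r i ≤ 1)
    (hps : ∑ i, p i = 1) (hqs : ∑ i, q i = 1) (hrs : ∑ i, r i = 1) :
    |(∑ i, p i * Real.log (p i / q i)) - ∑ i, p i * Real.log (p i / r i)| ≤
      (Real.sqrt 2 / γ) * Real.sqrt (∑ i, q i * Real.log (q i / r i)) ∧
    |(∑ i, p i * Real.log (p i / q i)) - ∑ i, p i * Real.log (p i / r i)| ≤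
      (Real.sqrt 2 / γ) * Real.sqrt (∑ i, r i * Real.log (r i / q i)) := by
  have hp0 : ∀ i, 0 < p i := fun i => lt_of_lt_of_le hγ (hp i).1
  have hq0 : ∀ i, 0 < q i := fun i => lt_of_lt_of_le hγ (hq i).1
  have hr0 : ∀ i, 0 < r i := fun i => lt_of_lt_of_le hγ (hr i).1
  have hdiff : (∑ i, p i * Real.log (p i / q i)) - ∑ i, p i * Real.log (p i / r i)
      = ∑ i, p i * (Real.log (r i) - Real.log (q i)) := by
    rw [← Finset.sum_sub_distrib]
    refine Finset.sum_congr rfl fun i _ => ?_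
    rw [Real.log_div (hp0 i).ne' (hq0 i).ne', Real.log_div (hp0 i).ne' (hr0 i).ne']
    ring
  have hbound : |(∑ i, p i * Real.log (p i / q i)) - ∑ i, p i * Real.log (p i / r i)|
      ≤ (∑ i, |q i - r i|) / γ := by
    rw [hdiff]
    calc |∑ i, p i * (Real.log (r i) - Real.log (q i))|
        ≤ ∑ i, |p i * (Real.log (r i) - Real.log (q i))| :=
          Finset.abs_sum_le_sum_abs _ _
      _ ≤ ∑ i, |q i - r i| / γ := by
          refine Finset.sum_le_sum fun i _ => ?_
          rw [abs_mul, abs_of_pos (hp0 i)]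
          have h1 : |Real.log (r i) - Real.log (q i)| ≤ |r i - q i| / γ :=
            abs_log_sub_log_le hγ (hr i).1 (hq i).1
          rw [abs_sub_comm (r i) (q i)] at h1
          calc p i * |Real.log (r i) - Real.log (q i)|
              ≤ 1 * (|q i - r i| / γ) :=
                mul_le_mul (hp i).2 h1 (abs_nonneg _) zero_le_one
            _ = |q i - r i| / γ := one_mul _
      _ = (∑ i, |q i - r i|) / γ := (Finset.sum_div _ _ _).symm
  constructor
  · have hP := pinsker_sum hq0 hr0 hqs hrs
    calc _ ≤ (∑ i, |q i - r i|) / γ := hbound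
      _ ≤ (Real.sqrt 2 * Real.sqrt (∑ i, q i * Real.log (q i / r i))) / γ := by gcongr
      _ = (Real.sqrt 2 / γ) * Real.sqrt (∑ i, q i * Real.log (q i / r i)) := by ring
  · have hP := pinsker_sum hr0 hq0 hrs hqs
    have hsym : (∑ i, |q i - r i|) = ∑ i, |r i - q i| := by
      refine Finset.sum_congr rfl fun i _ => abs_sub_comm _ _
    calc _ ≤ (∑ i, |q i - r i|) / γ := hbound
      _ = (∑ i, |r i - q i|) / γ := by rw [hsym]
      _ ≤ (Real.sqrt 2 * Real.sqrt (∑ i, r i * Real.log (r i / q i))) / γ := by gcongr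
      _ = (Real.sqrt 2 / γ) * Real.sqrt (∑ i, r i * Real.log (r i / q i)) := by ring
end

section
/- Let V be a convex set of vectors in the interior of the probability simplex in ℝ^k, let w be a probability vector with strictly positive entries, and suppose v* ∈ V minimizes the reverse KL divergence KL(v‖w) over v ∈ V. Then for every u ∈ V, KL(u‖w) ≥ KL(u‖v*) + KL(v*‖w). -/
open Real Finset

/-- Generalized Pythagorean inequality for the reverse-KL Bregman projection
onto a convex subset of the open probability simplex. -/
theorem reverse_kl_pythagorean (k : ℕ) (V : Set (Fin k → ℝ))
    (hVconv : Convex ℝ V)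
    (hVsimplex : ∀ v ∈ V, (∀ i, 0 < v i) ∧ ∑ i, v i = 1)
    (w : Fin k → ℝ) (hw : ∀ i, 0 < w i) (hws : ∑ i, w i = 1)
    (vstar : Fin k → ℝ) (hvV : vstar ∈ V)
    (hmin : ∀ v ∈ V, (∑ i, vstar i * Real.log (vstar i / w i)) ≤
      ∑ i, v i * Real.log (v i / w i)) :
    ∀ u ∈ V,
      (∑ i, u i * Real.log (u i / vstar i)) +
        (∑ i, vstar i * Real.log (vstar i / w i)) ≤
      ∑ i, u i * Real.log (u i / w i) := by
  intro u huV
  obtain ⟨hu_pos, hu_sum⟩ := hVsimplex u huV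
  obtain ⟨hv_pos, hv_sum⟩ := hVsimplex vstar hvV
  set d : Fin k → ℝ := fun i => u i - vstar i with hd
  have hdsum : ∑ i, d i = 0 := by
    simp [hd, Finset.sum_sub_distrib, hu_sum, hv_sum]
  set D : ℝ := ∑ i, d i * Real.log (vstar i / w i) with hD
  set g : ℝ → ℝ := fun t =>
    ∑ i, (vstar i + t * d i) * Real.log ((vstar i + t * d i) / w i) with hg
  -- derivative of g at 0 is D
  have hderiv : HasDerivAt g D 0 := by
    have h1 : HasDerivAt g (∑ i, (Real.log (vstar i / w i) + 1) * d i) 0 := by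
      apply HasDerivAt.fun_sum
      intro i _
      have ha : HasDerivAt (fun t : ℝ => vstar i + t * d i) (d i) 0 := by
        simpa using (hasDerivAt_id (0:ℝ)).mul_const (d i) |>.const_add (vstar i)
      have hb : HasDerivAt (fun x : ℝ => x * Real.log (x / w i))
          (Real.log (vstar i / w i) + 1) (vstar i) := by
        have hc : HasDerivAt (fun x : ℝ => x * Real.log (w i)) (Real.log (w i)) (vstar i) := by
          simpa using (hasDerivAt_id (vstar i)).mul_const (Real.log (w i))
        have hb' : HasDerivAt (fun x : ℝ => x * Real.log x - x * Real.log (w i))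
            (Real.log (vstar i) + 1 - Real.log (w i)) (vstar i) :=
          (Real.hasDerivAt_mul_log (ne_of_gt (hv_pos i))).sub hc
        have heq : (fun x : ℝ => x * Real.log (x / w i)) =ᶠ[nhds (vstar i)]
            (fun x : ℝ => x * Real.log x - x * Real.log (w i)) := by
          filter_upwards [IsOpen.mem_nhds isOpen_Ioi (hv_pos i)] with x hx
          rw [Real.log_div (ne_of_gt hx) (ne_of_gt (hw i))]; ring
        have := hb'.congr_of_eventuallyEq heq
        refine this.congr_deriv ?_
        rw [Real.log_div (ne_of_gt (hv_pos i)) (ne_of_gt (hw i))]; ring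
      have hb2 : HasDerivAt (fun x : ℝ => x * Real.log (x / w i))
          (Real.log (vstar i / w i) + 1) ((fun t : ℝ => vstar i + t * d i) 0) := by
        simpa using hb
      have hcomp := hb2.comp (0:ℝ) ha
      exact hcomp.congr_deriv (by ring)
    convert h1 using 1
    have : ∑ i, (Real.log (vstar i / w i) + 1) * d i
        = (∑ i, d i * Real.log (vstar i / w i)) + ∑ i, d i := by
      rw [← Finset.sum_add_distrib]; apply Finset.sum_congr rfl; intro i _; ring
    rw [hD, this, hdsum, add_zero]
  -- g t ≥ g 0 for t ∈ (0,1]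
  have hge : ∀ t ∈ Set.Ioc (0:ℝ) 1, g 0 ≤ g t := by
    intro t ht
    have hmem : (fun i => vstar i + t * d i) ∈ V := by
      have := hVconv hvV huV (a := 1 - t) (b := t) (by linarith [ht.2]) (le_of_lt ht.1)
        (by ring)
      convert this using 1
      funext i
      simp [hd]; ring
    have := hmin _ hmem
    have hg0 : g 0 = ∑ i, vstar i * Real.log (vstar i / w i) := by
      simp [hg]
    rw [hg0]
    simpa [hg] using this
  -- conclude 0 ≤ D
  have hDnn : 0 ≤ D := by
    have hslope : Filter.Tendsto (slope g 0) (nhdsWithin 0 {(0:ℝ)}ᶜ) (nhds D) :=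
      hasDerivAt_iff_tendsto_slope.mp hderiv
    have hslope' : Filter.Tendsto (slope g 0) (nhdsWithin 0 (Set.Ioi 0)) (nhds D) :=
      hslope.mono_left (nhdsWithin_mono 0 (fun x hx => ne_of_gt hx))
    refine ge_of_tendsto hslope' ?_
    filter_upwards [Ioc_mem_nhdsGT_of_mem (by norm_num : (0:ℝ) ∈ Set.Ico 0 1)] with t ht
    have := hge t ht
    rw [slope_def_field]
    have ht0 : 0 < t := ht.1
    have : 0 ≤ g t - g 0 := by linarith
    have := div_nonneg this (le_of_lt ht0)
    simpa [div_eq_iff, sub_zero] using this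
  -- final algebra
  have key : (∑ i, u i * Real.log (u i / w i))
      - (∑ i, u i * Real.log (u i / vstar i))
      - (∑ i, vstar i * Real.log (vstar i / w i)) = D := by
    rw [hD, ← Finset.sum_sub_distrib, ← Finset.sum_sub_distrib]
    apply Finset.sum_congr rfl
    intro i _
    rw [Real.log_div (ne_of_gt (hu_pos i)) (ne_of_gt (hw i)),
      Real.log_div (ne_of_gt (hu_pos i)) (ne_of_gt (hv_pos i)),
      Real.log_div (ne_of_gt (hv_pos i)) (ne_of_gt (hw i))]
    simp [hd]; ring
  linarith
end

section
/- Donsker–Varadhan-type lower bound (finite case): let P, Q be probability vectors on {1,…,k} with strictly positive entries, let g : {1,…,k} → ℝ be σ-subgaussian under Q (i.e., E_Q[exp(ρ(g − E_Q g))] ≤ exp(ρ²σ²/2) for all ρ). Then KL(P‖Q) ≥ sup_{t ∈ ℝ} [t·(E_P[g] − E_Q[g]) − t²σ²/2] = (E_P[g] − E_Q[g])²/(2σ²). Consequently |E_P[g] − E_Q[g]| ≤ σ·√(2·KL(P‖Q)). -/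
/-!
Gibbs' variational principle: by Jensen's inequality for the concave logarithm, weighted by `P`,
`E_P[f] - KL(P‖Q) = E_P[log (Q e^f / P)] ≤ log E_Q[e^f]` for every `f`. Taking `f = t (g - E_Q g)`,
subgaussianity bounds the right side by `t²σ²/2`; optimizing at `t = Δ/σ²` gives `Δ²/(2σ²) ≤ KL`, where `Δ = E_P g - E_Q g`.
-/

open Real Finset

section Gibbs

variable {ι : Type*} [Fintype ι] {P Q : ι → ℝ}

theorem sum_mul_sub_log_sum_mul_exp_le_sum_mul_log_div (hP : ∀ i, 0 < P i) (hQ : ∀ i, 0 < Q i)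
    (hPs : ∑ i, P i = 1) (f : ι → ℝ) :
    ∑ i, P i * f i - log (∑ i, Q i * exp (f i)) ≤ ∑ i, P i * log (P i / Q i) := by
  have jensen := strictConcaveOn_log_Ioi.concaveOn.le_map_sum (t := univ) (w := P)
    (p := fun i => Q i * exp (f i) / P i) (fun i _ => (hP i).le) hPs
    (fun i _ => Set.mem_Ioi.2 (by have := hP i; have := hQ i; positivity))
  have hterm : ∀ i, P i * log (Q i * exp (f i) / P i) = P i * f i - P i * log (P i / Q i) := by
    intro i
    rw [log_div (by have := hQ i; positivity) (hP i).ne', log_mul (hQ i).ne' (exp_pos _).ne',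
      log_exp, log_div (hP i).ne' (hQ i).ne']
    ring
  have hmean : ∑ i, P i * (Q i * exp (f i) / P i) = ∑ i, Q i * exp (f i) :=
    sum_congr rfl fun i _ => mul_div_cancel₀ _ (hP i).ne'
  simp only [smul_eq_mul, hterm, hmean, sum_sub_distrib] at jensen
  linarith

theorem sum_mul_sub_le_sum_mul_log_div_of_sum_mul_exp_le (hP : ∀ i, 0 < P i)
    (hQ : ∀ i, 0 < Q i) (hPs : ∑ i, P i = 1) {f : ι → ℝ} {c : ℝ}
    (hc : ∑ i, Q i * exp (f i) ≤ exp c) :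
    ∑ i, P i * f i - c ≤ ∑ i, P i * log (P i / Q i) := by
  have hne : (univ : Finset ι).Nonempty := nonempty_of_sum_ne_zero (by rw [hPs]; exact one_ne_zero)
  have hZ : 0 < ∑ i, Q i * exp (f i) := sum_pos (fun i _ => mul_pos (hQ i) (exp_pos _)) hne
  have := (log_le_iff_le_exp hZ).2 hc
  linarith [sum_mul_sub_log_sum_mul_exp_le_sum_mul_log_div hP hQ hPs f]

end Gibbs

theorem sq_div_le_of_forall_mul_sub_sq_mul_le {Δ v K : ℝ} (hv : 0 < v)
    (h : ∀ t, t * Δ - t ^ 2 * v / 2 ≤ K) : Δ ^ 2 / (2 * v) ≤ K := by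
  convert h (Δ / v) using 1
  field_simp
  ring

theorem abs_le_mul_sqrt_of_sq_div_le {Δ σ K : ℝ} (hσ : 0 < σ) (h : Δ ^ 2 / (2 * σ ^ 2) ≤ K) :
    |Δ| ≤ σ * √(2 * K) := by
  rw [← sqrt_sq hσ.le, ← sqrt_mul (sq_nonneg _)]
  apply abs_le_sqrt
  rw [div_le_iff₀ (by positivity)] at h
  linarith

theorem donsker_varadhan_finite_general (k : ℕ) (P Q : Fin k → ℝ)
    (hP : ∀ j, 0 < P j) (hQ : ∀ j, 0 < Q j)
    (hPs : ∑ j, P j = 1)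
    (g : Fin k → ℝ) (σ : ℝ) (hσ : 0 < σ)
    (hsub : ∀ ρ : ℝ, ∑ j, Q j * Real.exp (ρ * (g j - ∑ j', Q j' * g j')) ≤
      Real.exp (ρ ^ 2 * σ ^ 2 / 2)) :
    (∀ t : ℝ, t * ((∑ j, P j * g j) - ∑ j, Q j * g j) - t ^ 2 * σ ^ 2 / 2 ≤
        ∑ j, P j * Real.log (P j / Q j)) ∧
    ((∑ j, P j * g j) - ∑ j, Q j * g j) ^ 2 / (2 * σ ^ 2) ≤
      (∑ j, P j * Real.log (P j / Q j)) ∧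
    |(∑ j, P j * g j) - ∑ j, Q j * g j| ≤
      σ * Real.sqrt (2 * ∑ j, P j * Real.log (P j / Q j)) := by
  have lower : ∀ t : ℝ, t * ((∑ j, P j * g j) - ∑ j, Q j * g j) - t ^ 2 * σ ^ 2 / 2 ≤
      ∑ j, P j * Real.log (P j / Q j) := by
    intro t
    have hmean : ∑ j, P j * (t * (g j - ∑ j', Q j' * g j')) =
        t * ((∑ j, P j * g j) - ∑ j, Q j * g j) := by
      simp only [mul_sub, mul_left_comm (P _) t, sum_sub_distrib, ← mul_sum, ← sum_mul, hPs]
      ring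
    rw [← hmean]
    exact sum_mul_sub_le_sum_mul_log_div_of_sum_mul_exp_le hP hQ hPs (hsub t)
  have quadratic := sq_div_le_of_forall_mul_sub_sq_mul_le (by positivity) lower
  exact ⟨lower, quadratic, abs_le_mul_sqrt_of_sq_div_le hσ quadratic⟩

/-- Donsker–Varadhan-type lower bound in the finite case, and its consequences. -/
theorem donsker_varadhan_finite (k : ℕ) (P Q : Fin k → ℝ)
    (hP : ∀ j, 0 < P j) (hQ : ∀ j, 0 < Q j)
    (hPs : ∑ j, P j = 1) (hQs : ∑ j, Q j = 1)
    (g : Fin k → ℝ) (σ : ℝ) (hσ : 0 < σ)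
    (hsub : ∀ ρ : ℝ, ∑ j, Q j * Real.exp (ρ * (g j - ∑ j', Q j' * g j')) ≤
      Real.exp (ρ ^ 2 * σ ^ 2 / 2)) :
    (∀ t : ℝ, t * ((∑ j, P j * g j) - ∑ j, Q j * g j) - t ^ 2 * σ ^ 2 / 2 ≤
        ∑ j, P j * Real.log (P j / Q j)) ∧
    ((∑ j, P j * g j) - ∑ j, Q j * g j) ^ 2 / (2 * σ ^ 2) ≤
      (∑ j, P j * Real.log (P j / Q j)) ∧
    |(∑ j, P j * g j) - ∑ j, Q j * g j| ≤
      σ * Real.sqrt (2 * ∑ j, P j * Real.log (P j / Q j)) :=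
  donsker_varadhan_finite_general k P Q hP hQ hPs g σ hσ hsub
end
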